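/- If Δ and Δ' are finite simplicial complexes on disjoint vertex sets and Δ * Δ' is their join (faces are unions F ∪ F' with F ∈ Δ, F' ∈ Δ'), then the impartial strong placement game of the join is equivalent to the disjunctive sum: G(Δ * Δ') ≈ G(Δ) + G(Δ'). -/

import Mathlib

universe u

/-! Mathlib's `SetTheory.PGame` (removed from Mathlib since); reproduced here with its old definitions. -/
namespace SetTheory

/-- Pre-games, as in the older Mathlib. -/
inductive PGame : Type (u + 1)
  | mk : ∀ α β : Type u, (α → PGame) → (β → PGame) → PGame

namespace PGame

/-- The pair of relations `≤` and `⧏` on pre-games, defined by mutual recursion. -/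
noncomputable def le_lf (x : PGame.{u}) : PGame.{u} → Prop × Prop := by
  induction x with
  | mk xl xr xL xR IHxl IHxr =>
    intro y
    induction y with
    | mk yl yr yL yR IHyl IHyr =>
      exact ((∀ i, (IHxl i (mk yl yr yL yR)).2) ∧ ∀ j, (IHyr j).2,
        (∃ i, (IHyl i).1) ∨ ∃ j, (IHxr j (mk yl yr yL yR)).1)

instance : LE PGame.{u} :=
  ⟨fun x y => (le_lf x y).1⟩

/-- Game equivalence: `x ≤ y ∧ y ≤ x`. -/
def Equiv (x y : PGame.{u}) : Prop :=
  x ≤ y ∧ y ≤ x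

instance : HasEquiv PGame.{u} :=
  ⟨Equiv⟩

/-- The disjunctive sum of pre-games. -/
noncomputable def add (x : PGame.{u}) : PGame.{u} → PGame.{u} := by
  induction x with
  | mk xl xr xL xR IHxl IHxr =>
    intro y
    induction y with
    | mk yl yr yL yR IHyl IHyr =>
      exact mk (xl ⊕ yl) (xr ⊕ yr)
        (Sum.rec (fun i => IHxl i (mk yl yr yL yR)) IHyl)
        (Sum.rec (fun i => IHxr i (mk yl yr yL yR)) IHyr)

noncomputable instance : Add PGame.{u} :=
  ⟨add⟩

end PGame

end SetTheory

open SetTheory PGame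
open scoped PGame

variable {V : Type} [DecidableEq V]

/-- A (finite) simplicial complex: a downward-closed family of finite sets of vertices. -/
def IsComplex (Δ : Finset (Finset V)) : Prop :=
  ∀ F ∈ Δ, ∀ F' ⊆ F, F' ∈ Δ

/-- `F` is a facet (maximal face) of `Δ`. -/
def IsFacet (Δ : Finset (Finset V)) (F : Finset V) : Prop :=
  F ∈ Δ ∧ ∀ F' ∈ Δ, F ⊆ F' → F = F'

/-- The link of a vertex `v` in `Δ`: faces `F` with `v ∉ F` and `F ∪ {v} ∈ Δ`. -/
def linkC (Δ : Finset (Finset V)) (v : V) : Finset (Finset V) :=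
  Δ.filter fun F => v ∉ F ∧ insert v F ∈ Δ

theorem linkC_sup_lt (Δ : Finset (Finset V)) (v : V) (hv : {v} ∈ Δ) :
    (linkC Δ v).sup Finset.card < Δ.sup Finset.card := by
  have h1 : (1 : ℕ) ≤ Δ.sup Finset.card := by
    simpa using Finset.le_sup (f := Finset.card) hv
  refine (Finset.sup_lt_iff (by simp only [bot_eq_zero]; omega)).2 ?_
  intro F hF
  simp only [linkC, Finset.mem_filter] at hF
  obtain ⟨-, hvF, hins⟩ := hF
  have h2 := Finset.le_sup (f := Finset.card) hins
  rw [Finset.card_insert_of_notMem hvF] at h2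
  omega

/-- The impartial strong placement game of a simplicial complex: both players' moves are to
the links of the vertices of `Δ`. -/
def SPGame (Δ : Finset (Finset V)) : PGame :=
  ⟨{v : V // {v} ∈ Δ}, {v : V // {v} ∈ Δ},
    fun v => SPGame (linkC Δ v.1), fun v => SPGame (linkC Δ v.1)⟩
termination_by Δ.sup Finset.card
decreasing_by all_goals exact linkC_sup_lt Δ v.1 v.2

/-- The join of two simplicial complexes: faces are the unions `F ∪ F'` with `F ∈ Δ`,
`F' ∈ Δ'`. -/
def joinC (Δ Δ' : Finset (Finset V)) : Finset (Finset V) :=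
  (Δ ×ˢ Δ').image fun p => p.1 ∪ p.2

/-- The set of vertices of a complex. -/
def vertsC (Δ : Finset (Finset V)) : Finset V :=
  Δ.sup id

/-!
The two games are identical: their options can be matched, recursively, so that matched options
are again identical, and identical games are equivalent. Since the vertex sets are disjoint, a
face of `Δ * Δ'` splits uniquely as `F ∪ F'`; hence a vertex `v` of the join is a vertex of
exactly one of `Δ`, `Δ'`, and if it is a vertex of `Δ`, then `link_{Δ * Δ'} v = link_Δ v * Δ'`.
So the options of `G(Δ * Δ')` are the games `G(link_Δ v * Δ')` and `G(Δ * link_Δ' v)`, which by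
recursion on the size of the largest faces are identical to the options `G(link_Δ v) + G(Δ')` and
`G(Δ) + G(link_Δ' v)` of the sum.
-/

def BiTotalOn {α β : Type*} (r : α → β → Prop) (s : Set α) (t : Set β) : Prop :=
  (∀ a ∈ s, ∃ b ∈ t, r a b) ∧ ∀ b ∈ t, ∃ a ∈ s, r a b

namespace SetTheory.PGame

def LeftMoves : PGame.{u} → Type u
  | mk l _ _ _ => l

def RightMoves : PGame.{u} → Type u
  | mk _ r _ _ => r

def moveLeft : (x : PGame.{u}) → LeftMoves x → PGame.{u}
  | mk _ _ L _ => L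

def moveRight : (x : PGame.{u}) → RightMoves x → PGame.{u}
  | mk _ _ _ R => R

def LF (x y : PGame.{u}) : Prop :=
  (le_lf x y).2

infix:50 " ⧏ " => LF

theorem le_def {x y : PGame.{u}} :
    x ≤ y ↔ (∀ i, x.moveLeft i ⧏ y) ∧ ∀ j, x ⧏ y.moveRight j := by
  cases x; cases y; exact Iff.rfl

theorem lf_def {x y : PGame.{u}} :
    x ⧏ y ↔ (∃ i, x ≤ y.moveLeft i) ∨ ∃ j, x.moveRight j ≤ y := by
  cases x; cases y; exact Iff.rfl

theorem range_moveLeft_add (x y : PGame.{u}) :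
    Set.range (x + y).moveLeft =
      (· + y) '' Set.range x.moveLeft ∪ (x + ·) '' Set.range y.moveLeft := by
  cases x; cases y
  rw [← Set.range_comp, ← Set.range_comp, ← Set.Sum.elim_range]
  rfl

theorem range_moveRight_add (x y : PGame.{u}) :
    Set.range (x + y).moveRight =
      (· + y) '' Set.range x.moveRight ∪ (x + ·) '' Set.range y.moveRight := by
  cases x; cases y
  rw [← Set.range_comp, ← Set.range_comp, ← Set.Sum.elim_range]
  rfl

def Identical : PGame.{u} → PGame.{u} → Prop
  | mk _ _ xL xR, mk _ _ yL yR =>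
    Relator.BiTotal (fun i j => Identical (xL i) (yL j)) ∧
      Relator.BiTotal (fun i j => Identical (xR i) (yR j))

theorem identical_iff {x y : PGame.{u}} :
    Identical x y ↔
      BiTotalOn Identical (Set.range x.moveLeft) (Set.range y.moveLeft) ∧
        BiTotalOn Identical (Set.range x.moveRight) (Set.range y.moveRight) := by
  cases x; cases y
  simp only [Identical, BiTotalOn, Relator.BiTotal, Relator.LeftTotal, Relator.RightTotal,
    Set.forall_mem_range, Set.exists_range_iff]
  rfl

theorem Identical.equiv {x y : PGame.{u}} (h : Identical x y) : x ≈ y := by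
  induction x generalizing y with
  | mk xl xr xL xR ihL ihR =>
  cases y with
  | mk yl yr yL yR =>
  obtain ⟨⟨hL, hL'⟩, hR, hR'⟩ := h
  refine ⟨le_def.2 ⟨fun i => ?_, fun j => ?_⟩, le_def.2 ⟨fun j => ?_, fun i => ?_⟩⟩
  · obtain ⟨j, hj⟩ := hL i
    exact lf_def.2 (Or.inl ⟨j, (ihL i hj).1⟩)
  · obtain ⟨i, hi⟩ := hR' j
    exact lf_def.2 (Or.inr ⟨i, (ihR i hi).1⟩)
  · obtain ⟨i, hi⟩ := hL' j
    exact lf_def.2 (Or.inl ⟨i, (ihL i hi).2⟩)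
  · obtain ⟨j, hj⟩ := hR i
    exact lf_def.2 (Or.inr ⟨j, (ihR i hj).2⟩)

end SetTheory.PGame

theorem mem_joinC {Δ Δ' : Finset (Finset V)} {F : Finset V} :
    F ∈ joinC Δ Δ' ↔ ∃ A ∈ Δ, ∃ B ∈ Δ', A ∪ B = F := by
  simp only [joinC, Finset.mem_image, Finset.mem_product, Prod.exists, and_assoc,
    exists_and_left]

theorem joinC_comm (Δ Δ' : Finset (Finset V)) : joinC Δ Δ' = joinC Δ' Δ := by
  ext F
  simp only [mem_joinC]
  exact ⟨fun ⟨A, hA, B, hB, h⟩ => ⟨B, hB, A, hA, Finset.union_comm B A ▸ h⟩,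
    fun ⟨A, hA, B, hB, h⟩ => ⟨B, hB, A, hA, Finset.union_comm B A ▸ h⟩⟩

theorem singleton_mem_joinC {Δ Δ' : Finset (Finset V)} (h0 : ∅ ∈ Δ) (h0' : ∅ ∈ Δ') {v : V} :
    {v} ∈ joinC Δ Δ' ↔ {v} ∈ Δ ∨ {v} ∈ Δ' := by
  refine ⟨fun h => ?_, ?_⟩
  · obtain ⟨A, hA, B, hB, hAB⟩ := mem_joinC.1 h
    rcases Finset.subset_singleton_iff.1 (hAB ▸ Finset.subset_union_left : A ⊆ {v}) with rfl | rfl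
    · rw [Finset.empty_union] at hAB
      exact Or.inr (hAB ▸ hB)
    · exact Or.inl hA
  · rintro (h | h)
    · exact mem_joinC.2 ⟨{v}, h, ∅, h0', Finset.union_empty _⟩
    · exact mem_joinC.2 ⟨∅, h0, {v}, h, Finset.empty_union _⟩

theorem subset_vertsC {Δ : Finset (Finset V)} {F : Finset V} (hF : F ∈ Δ) : F ⊆ vertsC Δ :=
  Finset.le_sup (f := id) hF

theorem vertsC_linkC_subset (Δ : Finset (Finset V)) (v : V) : vertsC (linkC Δ v) ⊆ vertsC Δ :=
  Finset.sup_mono (Finset.filter_subset _ Δ)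

theorem union_inter_vertsC {Δ Δ' : Finset (Finset V)} (hdisj : Disjoint (vertsC Δ) (vertsC Δ'))
    {A B : Finset V} (hA : A ∈ Δ) (hB : B ∈ Δ') : (A ∪ B) ∩ vertsC Δ = A := by
  rw [Finset.union_inter_distrib_right, Finset.inter_eq_left.2 (subset_vertsC hA),
    Finset.disjoint_iff_inter_eq_empty.1 (hdisj.symm.mono_left (subset_vertsC hB)),
    Finset.union_empty]

theorem linkC_joinC_left {Δ Δ' : Finset (Finset V)} (hdisj : Disjoint (vertsC Δ) (vertsC Δ'))
    {v : V} (hv : v ∈ vertsC Δ) : linkC (joinC Δ Δ') v = joinC (linkC Δ v) Δ' := by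
  ext F
  simp only [linkC, Finset.mem_filter, mem_joinC]
  constructor
  · rintro ⟨⟨A, hA, B, hB, rfl⟩, hvF, A', hA', B', hB', hAB'⟩
    have hA'_eq : A' = insert v A := by
      rw [← union_inter_vertsC hdisj hA' hB', hAB', Finset.insert_inter_of_mem hv,
        union_inter_vertsC hdisj hA hB]
    exact ⟨A, ⟨hA, fun h => hvF (Finset.mem_union_left B h), hA'_eq ▸ hA'⟩, B, hB, rfl⟩
  · rintro ⟨A, ⟨hA, hvA, hins⟩, B, hB, rfl⟩
    have hvB : v ∉ B := fun h => Finset.disjoint_left.1 hdisj hv (subset_vertsC hB h)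
    exact ⟨⟨A, hA, B, hB, rfl⟩, by simp [hvA, hvB], insert v A, hins, B, hB,
      Finset.insert_union v A B⟩

theorem linkC_joinC_right {Δ Δ' : Finset (Finset V)} (hdisj : Disjoint (vertsC Δ) (vertsC Δ'))
    {v : V} (hv : v ∈ vertsC Δ') : linkC (joinC Δ Δ') v = joinC Δ (linkC Δ' v) := by
  rw [joinC_comm, linkC_joinC_left hdisj.symm hv, joinC_comm]

theorem empty_mem_linkC {Δ : Finset (Finset V)} (h0 : ∅ ∈ Δ) {v : V} (hv : {v} ∈ Δ) :
    ∅ ∈ linkC Δ v :=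
  Finset.mem_filter.2 ⟨h0, Finset.notMem_empty v, hv⟩

theorem range_moveLeft_spGame (Δ : Finset (Finset V)) :
    Set.range (SPGame Δ).moveLeft = (fun v => SPGame (linkC Δ v)) '' {v | {v} ∈ Δ} := by
  rw [SPGame, Set.image_eq_range]
  rfl

theorem range_moveRight_spGame (Δ : Finset (Finset V)) :
    Set.range (SPGame Δ).moveRight = (fun v => SPGame (linkC Δ v)) '' {v | {v} ∈ Δ} := by
  rw [SPGame, Set.image_eq_range]
  rfl

theorem spGame_joinC_identical {Δ Δ' : Finset (Finset V)} (h0 : ∅ ∈ Δ) (h0' : ∅ ∈ Δ')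
    (hdisj : Disjoint (vertsC Δ) (vertsC Δ')) :
    Identical (SPGame (joinC Δ Δ')) (SPGame Δ + SPGame Δ') := by
  have ih_left : ∀ v, {v} ∈ Δ →
      Identical (SPGame (linkC (joinC Δ Δ') v)) (SPGame (linkC Δ v) + SPGame Δ') := by
    intro v hv
    rw [linkC_joinC_left hdisj (subset_vertsC hv (Finset.mem_singleton_self v))]
    exact spGame_joinC_identical (empty_mem_linkC h0 hv) h0'
      (hdisj.mono_left (vertsC_linkC_subset Δ v))
  have ih_right : ∀ v, {v} ∈ Δ' →
      Identical (SPGame (linkC (joinC Δ Δ') v)) (SPGame Δ + SPGame (linkC Δ' v)) := by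
    intro v hv
    rw [linkC_joinC_right hdisj (subset_vertsC hv (Finset.mem_singleton_self v))]
    exact spGame_joinC_identical h0 (empty_mem_linkC h0' hv)
      (hdisj.mono_right (vertsC_linkC_subset Δ' v))
  rw [identical_iff, range_moveLeft_add, range_moveRight_add]
  simp only [range_moveLeft_spGame, range_moveRight_spGame, and_self]
  constructor
  · rintro _ ⟨v, hv, rfl⟩
    rcases (singleton_mem_joinC h0 h0').1 hv with h | h
    · exact ⟨_, Or.inl ⟨_, ⟨v, h, rfl⟩, rfl⟩, ih_left v h⟩
    · exact ⟨_, Or.inr ⟨_, ⟨v, h, rfl⟩, rfl⟩, ih_right v h⟩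
  · rintro _ (⟨_, ⟨v, h, rfl⟩, rfl⟩ | ⟨_, ⟨v, h, rfl⟩, rfl⟩)
    · exact ⟨_, ⟨v, (singleton_mem_joinC h0 h0').2 (Or.inl h), rfl⟩, ih_left v h⟩
    · exact ⟨_, ⟨v, (singleton_mem_joinC h0 h0').2 (Or.inr h), rfl⟩, ih_right v h⟩
termination_by Δ.sup Finset.card + Δ'.sup Finset.card
decreasing_by
  · exact Nat.add_lt_add_right (linkC_sup_lt Δ v hv) _
  · exact Nat.add_lt_add_left (linkC_sup_lt Δ' v hv) _

theorem spGame_join_equiv_add_general (Δ Δ' : Finset (Finset V)) (h0 : ∅ ∈ Δ) (h0' : ∅ ∈ Δ')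
    (hdisj : Disjoint (vertsC Δ) (vertsC Δ')) :
    SPGame (joinC Δ Δ') ≈ SPGame Δ + SPGame Δ' :=
  (spGame_joinC_identical h0 h0' hdisj).equiv

/-- For simplicial complexes on disjoint vertex sets, the impartial strong placement game of
their join is equivalent to the disjunctive sum of their games. -/
theorem spGame_join_equiv_add (Δ Δ' : Finset (Finset V)) (hΔ : IsComplex Δ)
    (hΔ' : IsComplex Δ') (h0 : ∅ ∈ Δ) (h0' : ∅ ∈ Δ')
    (hdisj : Disjoint (vertsC Δ) (vertsC Δ')) :
    SPGame (joinC Δ Δ') ≈ SPGame Δ + SPGame Δ' :=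
  spGame_join_equiv_add_general Δ Δ' h0 h0' hdisj
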